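/- arXiv:2502.09177 — 4 statements merged into one kernel-verified Lean document; each statement's English description precedes it below -/
import Mathlib

section
/- Let ρ and σ be density operators on a finite-dimensional Hilbert space with the support of ρ contained in the support of σ. Then the fidelity satisfies F(ρ, σ) ≥ 1 - √(S(ρ‖σ)), where S(ρ‖σ) = Tr(ρ log ρ) - Tr(ρ log σ) is the quantum relative entropy. -/
/-!
Nussbaum–Szkoła. Diagonalise `ρ = ∑ pᵢ |uᵢ⟩⟨uᵢ|` and `σ = ∑ qⱼ |vⱼ⟩⟨vⱼ|` and put
`P(i, j) = pᵢ |⟨uᵢ, vⱼ⟩|²`, `Q(i, j) = qⱼ |⟨uᵢ, vⱼ⟩|²`. Then `S(ρ‖σ)` is the Kullback–Leibler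
divergence `D(P‖Q)` and `Re Tr (√ρ √σ)` is the Bhattacharyya coefficient `∑ √(P Q)`.
Classically, `log t ≤ t - 1` at `t = √(Q / P)` gives `D(P‖Q) ≥ 2 (1 - ∑ √(P Q))`, and since
`1 - ∑ √(P Q) ≤ 1` this yields `1 - ∑ √(P Q) ≤ √D(P‖Q)`. Finally, for `Y = √ρ √σ`,
`Re Tr Y ≤ Tr √(Yᴴ Y) = F(ρ, σ)`.
-/

open Matrix
open scoped ComplexOrder Classical

/-- Square root of a positive semidefinite matrix (junk value `0` otherwise). -/

noncomputable def msqrt {n : Type*} [Fintype n] [DecidableEq n] (A : Matrix n n ℂ) :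
    Matrix n n ℂ :=
  if h : A.PosSemidef then
    (h.1.eigenvectorUnitary : Matrix n n ℂ) * diagonal ((↑) ∘ Real.sqrt ∘ h.1.eigenvalues) *
      (star h.1.eigenvectorUnitary : Matrix n n ℂ) else 0

/-- Uhlmann fidelity `F(ρ,σ) = Tr √(√σ ρ √σ)`. -/
noncomputable def fidelity {n : Type*} [Fintype n] [DecidableEq n] (ρ σ : Matrix n n ℂ) : ℝ :=
  ((msqrt (msqrt σ * ρ * msqrt σ)).trace).re

/-- Matrix logarithm of a Hermitian matrix via the functional calculus
(with the convention `log 0 = 0` on the kernel; junk value `0` for non-Hermitian input). -/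

noncomputable def mlog {n : Type*} [Fintype n] [DecidableEq n] (A : Matrix n n ℂ) :
    Matrix n n ℂ :=
  if h : A.IsHermitian then h.cfc Real.log else 0

/-- Quantum relative entropy `S(ρ‖σ) = Tr(ρ log ρ) - Tr(ρ log σ)`. -/
noncomputable def relEntropy {n : Type*} [Fintype n] [DecidableEq n] (ρ σ : Matrix n n ℂ) : ℝ :=
  ((ρ * mlog ρ).trace - (ρ * mlog σ).trace).re

theorem two_mul_sub_sqrt_mul_le_mul_log_sub {p q : ℝ} (hp : 0 ≤ p) (hq : 0 ≤ q)
    (hqp : q = 0 → p = 0) :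
    2 * (p - √(p * q)) ≤ p * (Real.log p - Real.log q) := by
  rcases hp.eq_or_lt with rfl | hp
  · simp
  have hq : 0 < q := hq.lt_of_ne fun h => hp.ne' (hqp h.symm)
  have hsp : 0 < √p := Real.sqrt_pos.2 hp
  have hlog := Real.one_sub_inv_le_log_of_pos (div_pos hsp (Real.sqrt_pos.2 hq))
  rw [inv_div, Real.log_div hsp.ne' (Real.sqrt_pos.2 hq).ne', Real.log_sqrt hp.le,
    Real.log_sqrt hq.le] at hlog
  have hscale : p * (1 - √q / √p) = p - √(p * q) := by
    rw [mul_sub, mul_one, mul_div_left_comm, Real.div_sqrt, Real.sqrt_mul hp.le, mul_comm]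
  nlinarith [mul_le_mul_of_nonneg_left hlog hp.le]

theorem le_sqrt_of_two_mul_le {x D : ℝ} (hx : x ≤ 1) (hxD : 2 * x ≤ D) : x ≤ √D := by
  rcases le_or_gt x 0 with hx0 | hx0
  · exact hx0.trans (Real.sqrt_nonneg D)
  · exact (Real.le_sqrt' hx0).2 (by nlinarith)

open Finset in
theorem one_sub_sqrt_sum_mul_log_sub_le_sum_sqrt_mul {ι : Type*} [Fintype ι] (P Q : ι → ℝ)
    (hP : ∀ x, 0 ≤ P x) (hQ : ∀ x, 0 ≤ Q x) (hP1 : ∑ x, P x = 1)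
    (hQP : ∀ x, Q x = 0 → P x = 0) :
    1 - √(∑ x, P x * (Real.log (P x) - Real.log (Q x))) ≤ ∑ x, √(P x * Q x) := by
  have hD : 2 * (1 - ∑ x, √(P x * Q x)) ≤ ∑ x, P x * (Real.log (P x) - Real.log (Q x)) := by
    rw [← hP1, ← sum_sub_distrib, mul_sum]
    exact sum_le_sum fun x _ => two_mul_sub_sqrt_mul_le_mul_log_sub (hP x) (hQ x) (hQP x)
  have hBC : 0 ≤ ∑ x, √(P x * Q x) := sum_nonneg fun x _ => Real.sqrt_nonneg _
  linarith [le_sqrt_of_two_mul_le (by linarith) hD]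

theorem mul_mul_log_mul_sub_log_mul {a b c : ℝ} (h : b * c = 0 → a * c = 0) :
    a * c * (Real.log (a * c) - Real.log (b * c)) = a * c * (Real.log a - Real.log b) := by
  by_cases hac : a * c = 0
  · simp [hac]
  have hbc : b * c ≠ 0 := fun hbc => hac (h hbc)
  rw [Real.log_mul (left_ne_zero_of_mul hac) (right_ne_zero_of_mul hac),
    Real.log_mul (left_ne_zero_of_mul hbc) (right_ne_zero_of_mul hbc)]
  ring

namespace Matrix

theorem norm_sq_apply_le_re_conjTranspose_mul_self_apply {𝕜 m n : Type*} [RCLike 𝕜]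
    [Fintype m] (G : Matrix m n 𝕜) (i : m) (k : n) : ‖G i k‖ ^ 2 ≤ RCLike.re ((Gᴴ * G) k k) := by
  have h : RCLike.re ((Gᴴ * G) k k) = ∑ l, ‖G l k‖ ^ 2 := by
    simp only [mul_apply, conjTranspose_apply, RCLike.star_def, map_sum, RCLike.conj_mul]
    exact_mod_cast rfl
  rw [h]
  exact Finset.single_le_sum (f := fun l => ‖G l k‖ ^ 2) (fun _ _ => sq_nonneg _)
    (Finset.mem_univ i)

variable {𝕜 n : Type*} [RCLike 𝕜] [Fintype n] [DecidableEq n]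

theorem sum_norm_sq_apply_of_mem_unitaryGroup {U : Matrix n n 𝕜} (hU : U ∈ unitaryGroup n 𝕜)
    (i : n) : ∑ j, ‖U i j‖ ^ 2 = 1 := by
  have h := congr_fun (congr_fun (mem_unitaryGroup_iff.1 hU) i) i
  simp only [mul_apply, star_apply, RCLike.star_def, RCLike.mul_conj, one_apply_eq] at h
  exact_mod_cast h

theorem trace_diagonal_mul_mul_diagonal_mul_conjTranspose (a b : n → 𝕜) (W : Matrix n n 𝕜) :
    (diagonal a * W * diagonal b * Wᴴ).trace = ∑ i, ∑ j, a i * b j * (‖W i j‖ ^ 2 : ℝ) := by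
  simp only [trace, diag, mul_apply, conjTranspose_apply, diagonal_apply, ite_mul, zero_mul,
    mul_ite, mul_zero, Finset.sum_ite_eq, Finset.sum_ite_eq', Finset.mem_univ, if_true,
    RCLike.star_def, RCLike.ofReal_pow, ← RCLike.mul_conj]
  exact Finset.sum_congr rfl fun i _ => Finset.sum_congr rfl fun j _ => by ring

/-- In an eigenbasis of `Yᴴ Y` the `k`-th column of `Y` has squared norm `λₖ`, so `|Yₖₖ| ≤ √λₖ`. -/
theorem re_trace_le_sum_sqrt_eigenvalues (Y M : Matrix n n 𝕜) (hM : M.IsHermitian)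
    (hMY : M = Yᴴ * Y) : RCLike.re Y.trace ≤ ∑ k, √(hM.eigenvalues k) := by
  set E := (hM.eigenvectorUnitary : Matrix n n 𝕜)
  have hEE : E * star E = 1 := Unitary.mul_star_self_of_mem hM.eigenvectorUnitary.2
  set G := star E * Y * E
  have hGtrace : G.trace = Y.trace := by rw [trace_mul_cycle, hEE, one_mul]
  have hGG : Gᴴ * G = diagonal (RCLike.ofReal ∘ hM.eigenvalues) := by
    rw [← hM.conjStarAlgAut_star_eigenvectorUnitary, Unitary.conjStarAlgAut_star_apply]
    calc Gᴴ * G = star E * Yᴴ * (E * star E) * Y * E := by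
          simp only [G, ← star_eq_conjTranspose, star_mul, star_star, mul_assoc]
      _ = star E * M * E := by rw [hEE, mul_one, hMY, mul_assoc (star E)]
  rw [← hGtrace, trace, map_sum]
  refine Finset.sum_le_sum fun k _ => ?_
  have hdiag := G.norm_sq_apply_le_re_conjTranspose_mul_self_apply k k
  rw [hGG, diagonal_apply_eq, Function.comp_apply, RCLike.ofReal_re] at hdiag
  exact (RCLike.re_le_norm _).trans (Real.le_sqrt_of_sq_le hdiag)

namespace IsHermitian

variable {A B : Matrix n n 𝕜}

theorem trace_cfc (hA : A.IsHermitian) (f : ℝ → ℝ) :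
    (hA.cfc f).trace = ∑ i, (f (hA.eigenvalues i) : 𝕜) := by
  rw [IsHermitian.cfc, Unitary.conjStarAlgAut_apply, trace_mul_cycle, Unitary.coe_star_mul_self,
    one_mul, trace_diagonal]
  rfl

theorem cfc_id_eq (hA : A.IsHermitian) : hA.cfc id = A := by
  rw [← hA.cfc_eq]
  exact cfc_id ℝ A

theorem star_eigenvectorUnitary_mul_self (hA : A.IsHermitian) :
    star (hA.eigenvectorUnitary : Matrix n n 𝕜) * A =
      diagonal (RCLike.ofReal ∘ hA.eigenvalues) * star (hA.eigenvectorUnitary : Matrix n n 𝕜) := by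
  rw [← hA.conjStarAlgAut_star_eigenvectorUnitary, Unitary.conjStarAlgAut_star_apply,
    mul_assoc _ _ (star _), Unitary.mul_star_self_of_mem hA.eigenvectorUnitary.2, mul_one]

/-- `|⟨uᵢ, vⱼ⟩|²` for the eigenbases `(uᵢ)` of `A` and `(vⱼ)` of `B`. -/
noncomputable def eigenOverlap (hA : A.IsHermitian) (hB : B.IsHermitian) (i j : n) : ℝ :=
  ‖(star (hA.eigenvectorUnitary : Matrix n n 𝕜) * hB.eigenvectorUnitary) i j‖ ^ 2

theorem eigenOverlap_nonneg (hA : A.IsHermitian) (hB : B.IsHermitian) (i j : n) :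
    0 ≤ eigenOverlap hA hB i j :=
  sq_nonneg _

theorem sum_eigenOverlap (hA : A.IsHermitian) (hB : B.IsHermitian) (i : n) :
    ∑ j, eigenOverlap hA hB i j = 1 :=
  sum_norm_sq_apply_of_mem_unitaryGroup (star hA.eigenvectorUnitary * hB.eigenvectorUnitary).2 i

theorem eigenOverlap_self (hA : A.IsHermitian) (i j : n) :
    eigenOverlap hA hA i j = if i = j then 1 else 0 := by
  rw [eigenOverlap, Unitary.coe_star_mul_self, one_apply]
  split_ifs <;> simp

theorem trace_cfc_mul_cfc (hA : A.IsHermitian) (hB : B.IsHermitian) (f g : ℝ → ℝ) :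
    (hA.cfc f * hB.cfc g).trace =
      ((∑ i, ∑ j, f (hA.eigenvalues i) * g (hB.eigenvalues j) * eigenOverlap hA hB i j : ℝ) :
        𝕜) := by
  set U := (hA.eigenvectorUnitary : Matrix n n 𝕜)
  set V := (hB.eigenvectorUnitary : Matrix n n 𝕜)
  set Df := diagonal (RCLike.ofReal ∘ f ∘ hA.eigenvalues : n → 𝕜)
  set Dg := diagonal (RCLike.ofReal ∘ g ∘ hB.eigenvalues : n → 𝕜)
  have hcycle : (hA.cfc f * hB.cfc g).trace = (Df * (star U * V) * Dg * (star U * V)ᴴ).trace := by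
    rw [IsHermitian.cfc, IsHermitian.cfc, Unitary.conjStarAlgAut_apply,
      Unitary.conjStarAlgAut_apply, ← star_eq_conjTranspose, star_mul, star_star,
      show U * Df * star U * (V * Dg * star V) = U * (Df * star U * V * Dg * star V) by
        simp only [mul_assoc], trace_mul_comm]
    simp only [mul_assoc]
  rw [hcycle, trace_diagonal_mul_mul_diagonal_mul_conjTranspose]
  push_cast
  simp only [Function.comp_apply, eigenOverlap, RCLike.ofReal_pow]
  rfl

theorem eigenvalues_mul_eigenOverlap_eq_zero (hA : A.IsHermitian) (hB : B.IsHermitian)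
    (hker : ∀ v : n → 𝕜, B *ᵥ v = 0 → A *ᵥ v = 0) {i j : n} (hj : hB.eigenvalues j = 0) :
    hA.eigenvalues i * eigenOverlap hA hB i j = 0 := by
  set U := (hA.eigenvectorUnitary : Matrix n n 𝕜)
  set V := (hB.eigenvectorUnitary : Matrix n n 𝕜)
  have hAv : A *ᵥ ⇑(hB.eigenvectorBasis j) = 0 :=
    hker _ (by rw [mulVec_eigenvectorBasis, hj, zero_smul])
  have hentry : (star U * A * V) i j = 0 := by
    rw [← col_apply (star U * A * V) j i, ← mulVec_single_one, ← mulVec_mulVec,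
      eigenvectorUnitary_mulVec, ← mulVec_mulVec, hAv, mulVec_zero, Pi.zero_apply]
  rw [star_eigenvectorUnitary_mul_self, mul_assoc, diagonal_mul] at hentry
  rcases mul_eq_zero.1 hentry with hi | hij
  · rw [show hA.eigenvalues i = 0 by simpa using hi, zero_mul]
  · simp [eigenOverlap, V, hij]

noncomputable def nussbaumSzkolaLeft (hA : A.IsHermitian) (hB : B.IsHermitian) (x : n × n) : ℝ :=
  hA.eigenvalues x.1 * eigenOverlap hA hB x.1 x.2

noncomputable def nussbaumSzkolaRight (hA : A.IsHermitian) (hB : B.IsHermitian) (x : n × n) :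
    ℝ :=
  hB.eigenvalues x.2 * eigenOverlap hA hB x.1 x.2

theorem nussbaumSzkolaLeft_nonneg (hA : A.PosSemidef) (hB : B.IsHermitian) (x : n × n) :
    0 ≤ nussbaumSzkolaLeft hA.1 hB x :=
  mul_nonneg (hA.eigenvalues_nonneg _) (eigenOverlap_nonneg _ _ _ _)

theorem nussbaumSzkolaRight_nonneg (hA : A.IsHermitian) (hB : B.PosSemidef) (x : n × n) :
    0 ≤ nussbaumSzkolaRight hA hB.1 x :=
  mul_nonneg (hB.eigenvalues_nonneg _) (eigenOverlap_nonneg _ _ _ _)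

theorem sum_nussbaumSzkolaLeft (hA : A.IsHermitian) (hB : B.IsHermitian) :
    ∑ x, nussbaumSzkolaLeft hA hB x = RCLike.re A.trace := by
  simp only [nussbaumSzkolaLeft, Fintype.sum_prod_type, ← Finset.mul_sum, sum_eigenOverlap,
    mul_one, hA.trace_eq_sum_eigenvalues, map_sum, RCLike.ofReal_re]

theorem nussbaumSzkolaLeft_eq_zero_of_right_eq_zero (hA : A.IsHermitian) (hB : B.IsHermitian)
    (hker : ∀ v : n → 𝕜, B *ᵥ v = 0 → A *ᵥ v = 0) {x : n × n}
    (hx : nussbaumSzkolaRight hA hB x = 0) : nussbaumSzkolaLeft hA hB x = 0 := by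
  rcases mul_eq_zero.1 hx with hj | hij
  · exact eigenvalues_mul_eigenOverlap_eq_zero hA hB hker hj
  · simp [nussbaumSzkolaLeft, hij]

end IsHermitian

end Matrix

section

variable {n : Type*} [Fintype n] [DecidableEq n]

theorem msqrt_eq_cfc {A : Matrix n n ℂ} (hA : A.PosSemidef) : msqrt A = hA.1.cfc Real.sqrt := by
  rw [msqrt, dif_pos hA]
  rfl

theorem isHermitian_msqrt {A : Matrix n n ℂ} (hA : A.PosSemidef) : (msqrt A).IsHermitian := by
  rw [msqrt_eq_cfc hA, ← hA.1.cfc_eq]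
  exact cfc_predicate Real.sqrt A

theorem msqrt_mul_self {A : Matrix n n ℂ} (hA : A.PosSemidef) : msqrt A * msqrt A = A := by
  rw [msqrt_eq_cfc hA, ← hA.1.cfc_eq, ← cfc_mul Real.sqrt Real.sqrt A]
  conv_rhs => rw [← cfc_id' ℝ A hA.1.isSelfAdjoint]
  refine cfc_congr fun x hx => Real.mul_self_sqrt ?_
  rw [hA.1.spectrum_real_eq_range_eigenvalues] at hx
  obtain ⟨i, rfl⟩ := hx
  exact hA.eigenvalues_nonneg i

theorem mlog_eq_cfc {A : Matrix n n ℂ} (hA : A.IsHermitian) : mlog A = hA.cfc Real.log :=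
  dif_pos hA

theorem re_trace_msqrt_mul_msqrt_le_fidelity {ρ σ : Matrix n n ℂ} (hρ : ρ.PosSemidef)
    (hσ : σ.PosSemidef) : (msqrt ρ * msqrt σ).trace.re ≤ fidelity ρ σ := by
  set Y := msqrt ρ * msqrt σ
  have hBY : msqrt σ * ρ * msqrt σ = Yᴴ * Y := by
    rw [conjTranspose_mul, (isHermitian_msqrt hσ).eq, (isHermitian_msqrt hρ).eq]
    calc msqrt σ * ρ * msqrt σ = msqrt σ * (msqrt ρ * msqrt ρ) * msqrt σ := by
          rw [msqrt_mul_self hρ]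
      _ = msqrt σ * msqrt ρ * (msqrt ρ * msqrt σ) := by simp only [mul_assoc]
  have hB : (msqrt σ * ρ * msqrt σ).PosSemidef := hBY ▸ posSemidef_conjTranspose_mul_self Y
  have hfid : fidelity ρ σ = ∑ k, √(hB.1.eigenvalues k) := by
    rw [fidelity, msqrt_eq_cfc hB, hB.1.trace_cfc, Complex.re_sum]
    rfl
  rw [hfid]
  exact re_trace_le_sum_sqrt_eigenvalues Y _ hB.1 hBY

theorem relEntropy_eq_sum_nussbaumSzkola {ρ σ : Matrix n n ℂ} (hρ : ρ.IsHermitian)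
    (hσ : σ.IsHermitian) (hker : ∀ v : n → ℂ, σ *ᵥ v = 0 → ρ *ᵥ v = 0) :
    relEntropy ρ σ = ∑ x, hρ.nussbaumSzkolaLeft hσ x *
      (Real.log (hρ.nussbaumSzkolaLeft hσ x) - Real.log (hρ.nussbaumSzkolaRight hσ x)) := by
  have hself : ρ * mlog ρ = hρ.cfc id * hρ.cfc Real.log := by rw [hρ.cfc_id_eq, mlog_eq_cfc hρ]
  have hcross : ρ * mlog σ = hρ.cfc id * hσ.cfc Real.log := by rw [hρ.cfc_id_eq, mlog_eq_cfc hσ]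
  have hterm : ∀ x, hρ.nussbaumSzkolaLeft hσ x *
      (Real.log (hρ.nussbaumSzkolaLeft hσ x) - Real.log (hρ.nussbaumSzkolaRight hσ x)) =
      hρ.nussbaumSzkolaLeft hσ x *
        (Real.log (hρ.eigenvalues x.1) - Real.log (hσ.eigenvalues x.2)) :=
    fun _ => mul_mul_log_mul_sub_log_mul (hρ.nussbaumSzkolaLeft_eq_zero_of_right_eq_zero hσ hker)
  rw [relEntropy, Complex.sub_re, hself, hcross, IsHermitian.trace_cfc_mul_cfc,
    IsHermitian.trace_cfc_mul_cfc, Finset.sum_congr rfl fun x _ => hterm x]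
  simp only [Complex.coe_algebraMap, Complex.ofReal_re, IsHermitian.eigenOverlap_self,
    Fintype.sum_prod_type, IsHermitian.nussbaumSzkolaLeft, mul_sub, Finset.sum_sub_distrib, id]
  congr 1
  · refine Finset.sum_congr rfl fun i _ => ?_
    rw [← Finset.sum_mul, ← Finset.mul_sum, hρ.sum_eigenOverlap, mul_one]
    simp
  · exact Finset.sum_congr rfl fun i _ => Finset.sum_congr rfl fun j _ => mul_right_comm _ _ _

theorem re_trace_msqrt_mul_msqrt_eq_sum_nussbaumSzkola {ρ σ : Matrix n n ℂ} (hρ : ρ.PosSemidef)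
    (hσ : σ.PosSemidef) :
    (msqrt ρ * msqrt σ).trace.re =
      ∑ x, √(hρ.1.nussbaumSzkolaLeft hσ.1 x * hρ.1.nussbaumSzkolaRight hσ.1 x) := by
  rw [msqrt_eq_cfc hρ, msqrt_eq_cfc hσ, IsHermitian.trace_cfc_mul_cfc]
  simp only [Complex.coe_algebraMap, Complex.ofReal_re, Fintype.sum_prod_type]
  refine Finset.sum_congr rfl fun i _ => Finset.sum_congr rfl fun j _ => ?_
  rw [IsHermitian.nussbaumSzkolaLeft, IsHermitian.nussbaumSzkolaRight, mul_mul_mul_comm, ← sq,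
    Real.sqrt_mul (mul_nonneg (hρ.eigenvalues_nonneg i) (hσ.eigenvalues_nonneg j)),
    Real.sqrt_mul (hρ.eigenvalues_nonneg i),
    Real.sqrt_sq (IsHermitian.eigenOverlap_nonneg _ _ _ _)]

end

theorem fidelity_ge_one_sub_sqrt_relEntropy_general {n : Type*} [Fintype n] [DecidableEq n]
    (ρ σ : Matrix n n ℂ) (hρ : ρ.PosSemidef) (hρ1 : ρ.trace = 1)
    (hσ : σ.PosSemidef)
    (hsupp : ∀ v : n → ℂ, σ.mulVec v = 0 → ρ.mulVec v = 0) :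
    fidelity ρ σ ≥ 1 - Real.sqrt (relEntropy ρ σ) := by
  have hP1 : ∑ x, hρ.1.nussbaumSzkolaLeft hσ.1 x = 1 := by
    rw [IsHermitian.sum_nussbaumSzkolaLeft, hρ1, RCLike.one_re]
  have hbound := one_sub_sqrt_sum_mul_log_sub_le_sum_sqrt_mul _ _
    (IsHermitian.nussbaumSzkolaLeft_nonneg hρ hσ.1) (IsHermitian.nussbaumSzkolaRight_nonneg hρ.1 hσ)
    hP1 fun _ => hρ.1.nussbaumSzkolaLeft_eq_zero_of_right_eq_zero hσ.1 hsupp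
  rw [← relEntropy_eq_sum_nussbaumSzkola hρ.1 hσ.1 hsupp,
    ← re_trace_msqrt_mul_msqrt_eq_sum_nussbaumSzkola hρ hσ] at hbound
  exact hbound.trans (re_trace_msqrt_mul_msqrt_le_fidelity hρ hσ)

theorem fidelity_ge_one_sub_sqrt_relEntropy {n : Type*} [Fintype n] [DecidableEq n]
    (ρ σ : Matrix n n ℂ) (hρ : ρ.PosSemidef) (hρ1 : ρ.trace = 1)
    (hσ : σ.PosSemidef) (hσ1 : σ.trace = 1)
    (hsupp : ∀ v : n → ℂ, σ.mulVec v = 0 → ρ.mulVec v = 0) :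
    fidelity ρ σ ≥ 1 - Real.sqrt (relEntropy ρ σ) :=
  fidelity_ge_one_sub_sqrt_relEntropy_general ρ σ hρ hρ1 hσ hsupp
end

section
/- Let Π be an orthogonal projection and F_e operators on a finite-dimensional Hilbert space satisfying Π F_{e'}† F_e Π = δ_{e',e} d_e Π with d_e > 0. Write the polar decompositions F_e Π = U_e Π √(d_e) with U_e unitary. Then the Petz recovery Kraus operators R_e := Π F_e† (Σ_{e'} F_{e'} Π F_{e'}†)^{-1/2} satisfy R_e = Π U_e†, where the inverse square root is taken on the support. -/
/-!
With `V e = U e * P`, the Knill–Laflamme condition and the polar decomposition say that the `V e`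
are partial isometries with orthogonal ranges: `(V e')ᴴ * V e = if e' = e then P else 0`.
Hence `S = ∑ F e * P * (F e)ᴴ = ∑ d e • V e * (V e)ᴴ` acts on the columns of `V e` as `d e`,
and `∑ V e * (V e)ᴴ` acts on them as the identity. As `B` commutes with `S` and `B * S * B` is
that support projection, `B * B` acts there as `(d e)⁻¹`, and positivity of `B` forces `B` to
act as `(√(d e))⁻¹`. Taking adjoints, `P * (F e)ᴴ * B = √(d e) • (P * (U e)ᴴ * B) = P * (U e)ᴴ`.
-/

open Matrix
open scoped ComplexOrder

namespace Matrix

variable {𝕜 : Type*} [RCLike 𝕜] {m n ι : Type*}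

theorem PosSemidef.mul_eq_smul_of_mul_mul_eq_sq_smul [Fintype n] [DecidableEq n]
    {B : Matrix n n 𝕜} (hB : B.PosSemidef) {c : ℝ} (hc : 0 < c) {M : Matrix n m 𝕜}
    (h : B * B * M = ((c ^ 2 : ℝ) : 𝕜) • M) : B * M = (c : 𝕜) • M := by
  have hdet : IsUnit (B + (c : 𝕜) • 1).det := (isUnit_iff_isUnit_det _).mp
    (PosDef.posSemidef_add hB (PosDef.one.smul (RCLike.ofReal_pos.mpr hc))).isUnit
  have hfactor : (B + (c : 𝕜) • 1) * ((B - (c : 𝕜) • 1) * M) = 0 := by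
    rw [← Matrix.mul_assoc, ← ((Commute.one_right B).smul_right _).mul_self_sub_mul_self_eq,
      Matrix.sub_mul, h, smul_mul_smul_comm, Matrix.one_mul, Matrix.smul_mul, Matrix.one_mul,
      RCLike.ofReal_pow, sq, sub_self]
  have := nonsing_inv_mul_cancel_left _ _ hdet ▸ congrArg ((B + (c : 𝕜) • 1)⁻¹ * ·) hfactor
  rwa [Matrix.mul_zero, Matrix.sub_mul, Matrix.smul_mul, Matrix.one_mul, sub_eq_zero] at this

theorem mul_mul_conjTranspose_eq_of_isHermitian_idempotent [Fintype m] {P : Matrix m m 𝕜}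
    (hP : P.IsHermitian) (hP2 : P * P = P) (A : Matrix n m 𝕜) :
    A * P * Aᴴ = A * P * (A * P)ᴴ := by
  rw [conjTranspose_mul, hP.eq, ← Matrix.mul_assoc, Matrix.mul_assoc A P P, hP2]

section Orthogonal

variable [Fintype n] [DecidableEq ι] {V : ι → Matrix n m 𝕜} {P : Matrix m m 𝕜}

theorem conjTranspose_mul_eq_ite_of_smul {s : ι → ℝ} (hs : ∀ e, s e ≠ 0)
    (h : ∀ e' e, ((s e' : 𝕜) • V e')ᴴ * ((s e : 𝕜) • V e) =
      if e' = e then ((s e ^ 2 : ℝ) : 𝕜) • P else 0) (e' e : ι) :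
    (V e')ᴴ * V e = if e' = e then P else 0 := by
  have key := h e' e
  rw [conjTranspose_smul, RCLike.star_def, RCLike.conj_ofReal, Matrix.smul_mul,
    Matrix.mul_smul, smul_smul, ← RCLike.ofReal_mul] at key
  split_ifs at key ⊢ with he
  · subst he
    rwa [← sq, (smul_right_injective _ (RCLike.ofReal_ne_zero.mpr (pow_ne_zero 2 (hs e')))).eq_iff]
      at key
  · exact (smul_eq_zero.mp key).resolve_left
      (RCLike.ofReal_ne_zero.mpr (mul_ne_zero (hs e') (hs e)))

theorem sum_smul_mul_conjTranspose_mul_of_orthogonal [Fintype ι] [Fintype m]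
    (hV : ∀ e' e, (V e')ᴴ * V e = if e' = e then P else 0) (hVP : ∀ e, V e * P = V e)
    (c : ι → 𝕜) (e : ι) : (∑ e', c e' • (V e' * (V e')ᴴ)) * V e = c e • V e := by
  rw [Matrix.sum_mul, Finset.sum_eq_single e]
  · rw [Matrix.smul_mul, Matrix.mul_assoc, hV, if_pos rfl, hVP]
  · intro e' _ he'
    rw [Matrix.smul_mul, Matrix.mul_assoc, hV, if_neg he', Matrix.mul_zero, smul_zero]
  · exact fun he => absurd (Finset.mem_univ e) he

end Orthogonal

end Matrix

section KnillLaflamme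

variable {n ι : Type*} [Fintype n] [DecidableEq ι] {P : Matrix n n ℂ} {F U : ι → Matrix n n ℂ}
  {d : ι → ℝ}

theorem conjTranspose_polar_mul_polar (hP : P.IsHermitian) (hd : ∀ e, 0 < d e)
    (hKL : ∀ e' e, P * (F e')ᴴ * (F e) * P = if e' = e then (d e : ℂ) • P else 0)
    (hpolar : ∀ e, F e * P = (Real.sqrt (d e) : ℂ) • (U e * P)) (e' e : ι) :
    (U e' * P)ᴴ * (U e * P) = if e' = e then P else 0 := by
  refine conjTranspose_mul_eq_ite_of_smul (V := fun e => U e * P)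
    (fun e => (Real.sqrt_pos.mpr (hd e)).ne') (fun e' e => ?_) e' e
  simp only [RCLike.ofReal_eq_complex_ofReal]
  rw [← hpolar, ← hpolar, Real.sq_sqrt (hd e).le, ← hKL, conjTranspose_mul, hP.eq]
  simp only [mul_assoc]

variable [Fintype ι]

theorem sum_kraus_mul_polar (hP : P.IsHermitian) (hP2 : P * P = P) (hd : ∀ e, 0 < d e)
    (hKL : ∀ e' e, P * (F e')ᴴ * (F e) * P = if e' = e then (d e : ℂ) • P else 0)
    (hpolar : ∀ e, F e * P = (Real.sqrt (d e) : ℂ) • (U e * P)) (e : ι) :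
    (∑ e, F e * P * (F e)ᴴ) * (U e * P) = (d e : ℂ) • (U e * P) := by
  have hFPF : ∀ e, F e * P * (F e)ᴴ = (d e : ℂ) • (U e * P * (U e * P)ᴴ) := fun e => by
    rw [mul_mul_conjTranspose_eq_of_isHermitian_idempotent hP hP2, hpolar, conjTranspose_smul,
      smul_mul_smul_comm, Complex.star_def, Complex.conj_ofReal, ← Complex.ofReal_mul, ← sq,
      Real.sq_sqrt (hd e).le]
  simpa only [hFPF] using sum_smul_mul_conjTranspose_mul_of_orthogonal
    (conjTranspose_polar_mul_polar hP hd hKL hpolar) (fun e => by rw [mul_assoc, hP2])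
    (fun e => (d e : ℂ)) e

theorem sum_polar_mul_polar (hP : P.IsHermitian) (hP2 : P * P = P) (hd : ∀ e, 0 < d e)
    (hKL : ∀ e' e, P * (F e')ᴴ * (F e) * P = if e' = e then (d e : ℂ) • P else 0)
    (hpolar : ∀ e, F e * P = (Real.sqrt (d e) : ℂ) • (U e * P)) (e : ι) :
    (∑ e, U e * P * (U e)ᴴ) * (U e * P) = U e * P := by
  simpa only [one_smul, ← mul_mul_conjTranspose_eq_of_isHermitian_idempotent hP hP2]
    using sum_smul_mul_conjTranspose_mul_of_orthogonal
      (conjTranspose_polar_mul_polar hP hd hKL hpolar) (fun e => by rw [mul_assoc, hP2])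
      (fun _ => 1) e

end KnillLaflamme

theorem petz_kraus_eq_perfect_recovery_kraus_general
    {n ι : Type*} [Fintype n] [DecidableEq n] [Fintype ι] [DecidableEq ι]
    (P : Matrix n n ℂ) (hP : P.IsHermitian) (hP2 : P * P = P)
    (F U : ι → Matrix n n ℂ)
    (d : ι → ℝ) (hd : ∀ e, 0 < d e)
    (hKL : ∀ e' e, P * (F e')ᴴ * (F e) * P = if e' = e then (d e : ℂ) • P else 0)
    (hpolar : ∀ e, F e * P = (Real.sqrt (d e) : ℂ) • (U e * P))
    -- `B` is the inverse square root of `S := Σ_e F_e Π F_e†` on its support,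
    -- whose support projection is `Psupp := Σ_e U_e Π U_e†`:
    (B : Matrix n n ℂ) (hB : B.PosSemidef)
    (hBcomm : B * (∑ e, F e * P * (F e)ᴴ) = (∑ e, F e * P * (F e)ᴴ) * B)
    (hBinv : B * (∑ e, F e * P * (F e)ᴴ) * B = ∑ e, U e * P * (U e)ᴴ) :
    ∀ e, P * (F e)ᴴ * B = P * (U e)ᴴ := by
  intro e
  have hsqrt_pos : 0 < Real.sqrt (d e) := Real.sqrt_pos.mpr (hd e)
  have hB2S : B * B * (∑ e, F e * P * (F e)ᴴ) = ∑ e, U e * P * (U e)ᴴ := by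
    rw [mul_assoc, hBcomm, ← mul_assoc, hBinv]
  have hB2 : (d e : ℂ) • (B * B * (U e * P)) = U e * P := by
    rw [← mul_smul_comm, ← sum_kraus_mul_polar hP hP2 hd hKL hpolar, ← mul_assoc, hB2S,
      sum_polar_mul_polar hP hP2 hd hKL hpolar]
  have hBV : B * (U e * P) = (((Real.sqrt (d e))⁻¹ : ℝ) : ℂ) • (U e * P) := by
    refine hB.mul_eq_smul_of_mul_mul_eq_sq_smul (inv_pos.mpr hsqrt_pos) ?_
    conv_rhs => rw [← hB2]
    rw [smul_smul, inv_pow, Real.sq_sqrt (hd e).le, RCLike.ofReal_eq_complex_ofReal,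
      Complex.ofReal_inv, inv_mul_cancel₀ (Complex.ofReal_ne_zero.mpr (hd e).ne'), one_smul]
  calc P * (F e)ᴴ * B = (B * (F e * P))ᴴ := by
        rw [conjTranspose_mul, conjTranspose_mul, hB.isHermitian.eq, hP.eq]
    _ = (((Real.sqrt (d e) * (Real.sqrt (d e))⁻¹ : ℝ) : ℂ) • (U e * P))ᴴ := by
        rw [hpolar, mul_smul_comm, hBV, smul_smul, Complex.ofReal_mul]
    _ = P * (U e)ᴴ := by
        rw [mul_inv_cancel₀ hsqrt_pos.ne', Complex.ofReal_one, one_smul, conjTranspose_mul, hP.eq]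

/-- The Petz recovery Kraus operators `R_e = Π F_e† (Σ F_{e'} Π F_{e'}†)^{-1/2}` (inverse
square root taken on the support, characterized abstractly by the hypotheses on `B`)
equal `Π U_e†` under the diagonalized Knill–Laflamme condition. -/
theorem petz_kraus_eq_perfect_recovery_kraus
    {n ι : Type*} [Fintype n] [DecidableEq n] [Fintype ι] [DecidableEq ι]
    (P : Matrix n n ℂ) (hP : P.IsHermitian) (hP2 : P * P = P)
    (F U : ι → Matrix n n ℂ) (hU : ∀ e, U e ∈ Matrix.unitaryGroup n ℂ)
    (d : ι → ℝ) (hd : ∀ e, 0 < d e)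
    (hKL : ∀ e' e, P * (F e')ᴴ * (F e) * P = if e' = e then (d e : ℂ) • P else 0)
    (hpolar : ∀ e, F e * P = (Real.sqrt (d e) : ℂ) • (U e * P))
    -- `B` is the inverse square root of `S := Σ_e F_e Π F_e†` on its support,
    -- whose support projection is `Psupp := Σ_e U_e Π U_e†`:
    (B : Matrix n n ℂ) (hB : B.PosSemidef)
    (hBcomm : B * (∑ e, F e * P * (F e)ᴴ) = (∑ e, F e * P * (F e)ᴴ) * B)
    (hBinv : B * (∑ e, F e * P * (F e)ᴴ) * B = ∑ e, U e * P * (U e)ᴴ)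
    (hBsupp : B * (∑ e, U e * P * (U e)ᴴ) = B) :
    ∀ e, P * (F e)ᴴ * B = P * (U e)ᴴ :=
  petz_kraus_eq_perfect_recovery_kraus_general P hP hP2 F U d hd hKL hpolar B hB hBcomm hBinv
end

section
/- Let [c_{e',e}] be a Hermitian matrix indexed by a finite set of error labels satisfying Π E_{e'}† E_e Π = c_{e',e} Π for a projection Π and operators E_e. Then there exists a unitary matrix [u_{e',e}] such that the operators F_e := Σ_{e'} u_{e',e} E_{e'} satisfy Π F_{e'}† F_e Π = δ_{e',e} d_e Π with d_e ≥ 0 real. -/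
/-!
Through the projection `P`, `c` is the Gram matrix of the family `E`, and passing to
`F e = ∑ f, u f e • E f` turns it into `uᴴ * c * u`. Comparing `P * (E e')ᴴ * E e * P` with its
adjoint shows that `c` is Hermitian, so a unitary eigenvector matrix diagonalizes it. The
eigenvalues are nonnegative because `d • P = (F * P)ᴴ * (F * P)` is positive semidefinite while
`P = Pᴴ * P` has positive trace.
-/

open Matrix
open scoped ComplexOrder

namespace Matrix

variable {n ι R 𝕜 : Type*} [Fintype n]

lemma nonneg_of_smul_posSemidef [RCLike 𝕜] {P : Matrix n n 𝕜} (hP : P.IsHermitian)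
    (hP2 : IsIdempotentElem P) (hPne : P ≠ 0) {s : 𝕜} (hs : (s • P).PosSemidef) : 0 ≤ s := by
  have hPP : Pᴴ * P = P := by rw [hP.eq, hP2.eq]
  have htr : 0 < P.trace := by
    rw [← hPP]
    exact (posSemidef_conjTranspose_mul_self P).trace_nonneg.lt_of_ne'
      (trace_conjTranspose_mul_self_eq_zero_iff.not.mpr hPne)
  have hstr : 0 ≤ s * P.trace := by simpa only [trace_smul, smul_eq_mul] using hs.trace_nonneg
  calc s = s * P.trace * (P.trace)⁻¹ := by field_simp [htr.ne']
    _ ≥ 0 := mul_nonneg hstr (inv_pos.mpr htr).le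

lemma isHermitian_of_compress_conjTranspose_mul [Field R] [StarRing R] {P : Matrix n n R}
    (hP : P.IsHermitian) (hPne : P ≠ 0) {E : ι → Matrix n n R} {c : ι → ι → R}
    (hc : ∀ e' e, P * (E e')ᴴ * (E e) * P = c e' e • P) : (of c).IsHermitian := by
  ext e' e
  apply smul_left_injective R hPne
  calc star (c e e') • P = (c e e' • P)ᴴ := by rw [conjTranspose_smul, hP.eq]
    _ = (P * (E e)ᴴ * E e' * P)ᴴ := by rw [hc]
    _ = P * (E e')ᴴ * E e * P := by
        simp only [conjTranspose_mul, conjTranspose_conjTranspose, hP.eq, Matrix.mul_assoc]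
    _ = c e' e • P := hc e' e

lemma compress_sum_smul_conjTranspose_mul_sum_smul [Fintype ι] [CommRing R] [StarRing R]
    {P : Matrix n n R} {E : ι → Matrix n n R} {c : ι → ι → R}
    (hc : ∀ e' e, P * (E e')ᴴ * (E e) * P = c e' e • P)
    (u : Matrix ι ι R) (i j : ι) :
    P * (∑ f, u f i • E f)ᴴ * (∑ f, u f j • E f) * P = (uᴴ * of c * u) i j • P := by
  simp only [conjTranspose_sum, conjTranspose_smul, Matrix.mul_sum,
    Matrix.mul_smul, Matrix.smul_mul, hc, smul_smul, mul_apply, conjTranspose_apply, of_apply,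
    Finset.sum_mul, ← Finset.sum_smul]
  rw [Finset.sum_comm]
  congr 1
  exact Finset.sum_congr rfl fun f _ => Finset.sum_congr rfl fun g _ => by ring

end Matrix

theorem KL_diagonalization_general
    {n ι : Type*} [Fintype n] [Fintype ι] [DecidableEq ι]
    (P : Matrix n n ℂ) (hP : P.IsHermitian) (hP2 : P * P = P) (hPne : P ≠ 0)
    (E : ι → Matrix n n ℂ) (c : ι → ι → ℂ)
    (hc : ∀ e' e, P * (E e')ᴴ * (E e) * P = c e' e • P) :
    ∃ u ∈ Matrix.unitaryGroup ι ℂ, ∃ d : ι → ℝ, (∀ e, 0 ≤ d e) ∧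
      ∀ e' e, P * (∑ f, u f e' • E f)ᴴ * (∑ f, u f e • E f) * P =
        if e' = e then ((d e : ℝ) : ℂ) • P else 0 := by
  have hC := isHermitian_of_compress_conjTranspose_mul hP hPne hc
  set U : Matrix ι ι ℂ := (hC.eigenvectorUnitary : Matrix ι ι ℂ)
  have hdiag : Uᴴ * of c * U = diagonal (RCLike.ofReal ∘ hC.eigenvalues) := by
    simpa only [Unitary.conjStarAlgAut_star_apply, star_eq_conjTranspose]
      using hC.conjStarAlgAut_star_eigenvectorUnitary
  have hF : ∀ e' e, P * (∑ f, U f e' • E f)ᴴ * (∑ f, U f e • E f) * P =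
      if e' = e then ((hC.eigenvalues e : ℝ) : ℂ) • P else 0 := by
    intro e' e
    rw [compress_sum_smul_conjTranspose_mul_sum_smul hc, hdiag]
    split_ifs with h
    · simp [h]
    · simp [diagonal_apply_ne _ h]
  refine ⟨U, hC.eigenvectorUnitary.2, hC.eigenvalues, fun e => ?_, hF⟩
  have hPSD : (((hC.eigenvalues e : ℝ) : ℂ) • P).PosSemidef := by
    have hgram : P * (∑ f, U f e • E f)ᴴ * (∑ f, U f e • E f) * P
        = ((∑ f, U f e • E f) * P)ᴴ * ((∑ f, U f e • E f) * P) := by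
      rw [conjTranspose_mul, hP.eq]; noncomm_ring
    have := posSemidef_conjTranspose_mul_self ((∑ f, U f e • E f) * P)
    rwa [← hgram, hF, if_pos rfl] at this
  exact Complex.zero_le_real.mp (nonneg_of_smul_posSemidef hP hP2 hPne hPSD)

/-- Diagonalization step of the Knill–Laflamme condition: the Hermitian matrix
`[c_{e',e}]` can be diagonalized by a unitary `[u_{e',e}]` so that the rotated
Kraus operators `F_e = Σ_{e'} u_{e',e} E_{e'}` satisfy the diagonal condition. -/
theorem KL_diagonalization
    {n ι : Type*} [Fintype n] [DecidableEq n] [Fintype ι] [DecidableEq ι]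
    (P : Matrix n n ℂ) (hP : P.IsHermitian) (hP2 : P * P = P) (hPne : P ≠ 0)
    (E : ι → Matrix n n ℂ) (c : ι → ι → ℂ)
    (hc : ∀ e' e, P * (E e')ᴴ * (E e) * P = c e' e • P) :
    ∃ u ∈ Matrix.unitaryGroup ι ℂ, ∃ d : ι → ℝ, (∀ e, 0 ≤ d e) ∧
      ∀ e' e, P * (∑ f, u f e' • E f)ᴴ * (∑ f, u f e • E f) * P =
        if e' = e then ((d e : ℝ) : ℂ) • P else 0 :=
  KL_diagonalization_general P hP hP2 hPne E c hc
end

section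
/- The matrix [c_{e',e}] defined by Π E_{e'}† E_e Π = c_{e',e} Π (for a nonzero projection Π) is positive semidefinite. -/
/-!
Since `Π ≠ 0` is idempotent, some nonzero vector `v` satisfies `Π v = v`, and as `Π` is
Hermitian, `v† Π = v†` as well. Compressing the Knill–Laflamme condition to `v` gives
`c_{e',e} ‖v‖² = ⟨E_{e'} v, E_e v⟩`, so `[c_{e',e}]` is a positive multiple of the Gram matrix
of the vectors `E_e v`.
-/

open Matrix
open scoped ComplexOrder

namespace Matrix

variable {n ι R : Type*} [Fintype n]

theorem exists_ne_zero_mulVec_eq_self [Semiring R] {P : Matrix n n R} (hP2 : P * P = P)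
    (hP : P ≠ 0) : ∃ v, v ≠ 0 ∧ P *ᵥ v = v := by
  classical
  obtain ⟨i, j, hij⟩ : ∃ i j, P i j ≠ 0 := by
    by_contra! h
    exact hP (Matrix.ext h)
  refine ⟨P.col j, fun h => hij (congrFun h i), ?_⟩
  rw [← mulVec_single_one, mulVec_mulVec, hP2]

theorem star_dotProduct_mulVec_of_mul_mul_eq_smul [CommRing R] [StarRing R] {P M : Matrix n n R}
    (hP : P.IsHermitian) {c : R} (hM : P * M * P = c • P) {v : n → R} (hv : P *ᵥ v = v) :
    star v ⬝ᵥ M *ᵥ v = c * (star v ⬝ᵥ v) :=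
  calc star v ⬝ᵥ M *ᵥ v = star (P *ᵥ v) ⬝ᵥ M *ᵥ P *ᵥ v := by rw [hv]
    _ = star v ⬝ᵥ (P * M * P) *ᵥ v := by
      rw [star_mulVec, hP.eq, ← dotProduct_mulVec, mulVec_mulVec, mulVec_mulVec]
    _ = c * (star v ⬝ᵥ v) := by rw [hM, smul_mulVec, hv, dotProduct_smul, smul_eq_mul]

theorem posSemidef_of_star_dotProduct_conjTranspose_mul_mulVec [Fintype ι] [CommRing R]
    [PartialOrder R] [StarRing R] [StarOrderedRing R] (E : ι → Matrix n n R) (v : n → R) :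
    (of fun e' e => star v ⬝ᵥ ((E e')ᴴ * E e) *ᵥ v).PosSemidef := by
  have hgram : (of fun e' e => star v ⬝ᵥ ((E e')ᴴ * E e) *ᵥ v) =
      (of fun e => E e *ᵥ v)ᵀᴴ * (of fun e => E e *ᵥ v)ᵀ := by
    ext e' e
    rw [of_apply, ← mulVec_mulVec, dotProduct_mulVec, ← star_mulVec]
    simp [mul_apply, dotProduct]
  rw [hgram]
  exact posSemidef_conjTranspose_mul_self _

end Matrix

theorem KL_matrix_posSemidef_general
    {n ι : Type*} [Fintype n] [Fintype ι]
    (P : Matrix n n ℂ) (hP : P.IsHermitian) (hP2 : P * P = P) (hPne : P ≠ 0)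
    (E : ι → Matrix n n ℂ) (c : ι → ι → ℂ)
    (hc : ∀ e' e, P * (E e')ᴴ * (E e) * P = c e' e • P) :
    (Matrix.of fun e' e => c e' e).PosSemidef := by
  obtain ⟨v, hv0, hPv⟩ := exists_ne_zero_mulVec_eq_self hP2 hPne
  have hnorm : star v ⬝ᵥ v ≠ 0 := (dotProduct_star_self_pos_iff.2 hv0).ne'
  have hKL : (of fun e' e => c e' e) =
      (star v ⬝ᵥ v)⁻¹ • of fun e' e => star v ⬝ᵥ ((E e')ᴴ * E e) *ᵥ v := by
    ext e' e
    have hce := star_dotProduct_mulVec_of_mul_mul_eq_smul (M := (E e')ᴴ * E e) hP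
      (by rw [← Matrix.mul_assoc]; exact hc e' e) hPv
    rw [Matrix.smul_apply, of_apply, of_apply, hce, smul_eq_mul, mul_comm,
      mul_inv_cancel_right₀ hnorm]
  rw [hKL]
  exact (posSemidef_of_star_dotProduct_conjTranspose_mul_mulVec E v).smul
    (inv_nonneg.2 (dotProduct_star_self_nonneg v))

/-- The Knill–Laflamme matrix `[c_{e',e}]` defined by `Π E_{e'}† E_e Π = c_{e',e} Π`
is positive semidefinite. -/
theorem KL_matrix_posSemidef
    {n ι : Type*} [Fintype n] [DecidableEq n] [Fintype ι] [DecidableEq ι]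
    (P : Matrix n n ℂ) (hP : P.IsHermitian) (hP2 : P * P = P) (hPne : P ≠ 0)
    (E : ι → Matrix n n ℂ) (c : ι → ι → ℂ)
    (hc : ∀ e' e, P * (E e')ᴴ * (E e) * P = c e' e • P) :
    (Matrix.of fun e' e => c e' e).PosSemidef :=
  KL_matrix_posSemidef_general P hP hP2 hPne E c hc
end
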